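/- arXiv:2410.08020 — 4 statements merged into one kernel-verified Lean document; each statement's English description precedes it below -/
import Mathlib

section
/- Let φ(x*), φ(x₁), φ(x) ∈ ℝ^d be unit vectors with φ(x₁)ᵀφ(x) = 0, let λ' > 0, and write a = φ(x*)ᵀφ(x₁), b = φ(x*)ᵀφ(x). Define the uncertainty reduction ψ(X) = σ²_∅(x*) − σ²_X(x*) where σ²_X is the regularized posterior variance with multiset X. Then ψ({x₁, x₁}) = 2a² / (2 + λ') and ψ({x₁, x}) = (a² + b²) / (1 + λ'). Consequently, ψ({x₁, x}) > ψ({x₁, x₁}) if and only if b² > (λ' / (2 + λ')) · a². -/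
/-!
Both uncertainty reductions are quadratic forms `k ⬝ᵥ (K + λ'I)⁻¹ k` with a `2 × 2`
regularized Gram matrix, so they are computed from the adjugate formula for the inverse.
For `{x₁, x₁}` the Gram matrix is `!![1+λ', 1; 1, 1+λ']` with determinant `λ'(2+λ')`, for the
orthogonal pair `{x₁, x}` it is `(1+λ')I`; comparing the two closed forms is linear in `a²`
and `b²`.
-/

open Matrix

/-- Regularized posterior (conditional) kernel of the linear kernel
`k(a,b) = ⟪φ a, φ b⟫` after conditioning on the points `xs` with regularization `lam`:
`k_X(a,b) = k(a,b) − k_X(a)ᵀ (K_X + λ I)⁻¹ k_X(b)`.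
For `n = 0` this is the prior kernel; the diagonal `postK φ lam xs x x` is `σ²_X(x)`. -/
noncomputable def postK {α E : Type*} [NormedAddCommGroup E] [InnerProductSpace ℝ E]
    {n : ℕ} (φ : α → E) (lam : ℝ) (xs : Fin n → α) (a b : α) : ℝ :=
  (inner ℝ (φ a) (φ b) : ℝ) -
    (fun i => (inner ℝ (φ (xs i)) (φ a) : ℝ)) ⬝ᵥ
      ((Matrix.of (fun i j => (inner ℝ (φ (xs i)) (φ (xs j)) : ℝ))
          + lam • (1 : Matrix (Fin n) (Fin n) ℝ))⁻¹).mulVec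
        (fun i => (inner ℝ (φ (xs i)) (φ b) : ℝ))

/-- No invertibility is needed: when the determinant vanishes, both `⁻¹` and `/` return `0`. -/
theorem Matrix.dotProduct_inv_mulVec_fin_two_of {K : Type*} [Field K] (p q r s : K)
    (u w : Fin 2 → K) :
    u ⬝ᵥ (!![p, q; r, s]⁻¹ *ᵥ w)
      = (s * u 0 * w 0 - q * u 0 * w 1 - r * u 1 * w 0 + p * u 1 * w 1) / (p * s - q * r) := by
  rw [inv_def, det_fin_two_of, adjugate_fin_two_of, Ring.inverse_eq_inv, smul_mulVec,
    dotProduct_smul, smul_eq_mul, div_eq_inv_mul]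
  simp only [mulVec, dotProduct, Fin.sum_univ_two, of_apply, cons_val', cons_val_zero,
    cons_val_one, empty_val', cons_val_fin_one]
  ring

theorem inner_sub_postK_id_fin_two {E : Type*} [NormedAddCommGroup E] [InnerProductSpace ℝ E]
    (lam : ℝ) (y z x : E) :
    inner ℝ x x - postK id lam ![y, z] x x
      = ((inner ℝ z z + lam) * inner ℝ y x ^ 2
          - 2 * inner ℝ y z * inner ℝ y x * inner ℝ z x
          + (inner ℝ y y + lam) * inner ℝ z x ^ 2)
        / ((inner ℝ y y + lam) * (inner ℝ z z + lam) - inner ℝ y z ^ 2) := by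
  have hK : (of fun i j => inner ℝ (![y, z] i) (![y, z] j)) + lam • (1 : Matrix _ _ ℝ) =
      !![inner ℝ y y + lam, inner ℝ y z; inner ℝ z y, inner ℝ z z + lam] := by
    ext i j
    fin_cases i <;> fin_cases j <;> simp
  simp only [postK, id, sub_sub_cancel]
  rw [hK, dotProduct_inv_mulVec_fin_two_of, real_inner_comm z y]
  simp only [cons_val_zero, cons_val_one]
  ring

theorem two_mul_sq_div_lt_sq_add_sq_div_iff {lam a b : ℝ} (h : -1 < lam) :
    2 * a ^ 2 / (2 + lam) < (a ^ 2 + b ^ 2) / (1 + lam) ↔ lam / (2 + lam) * a ^ 2 < b ^ 2 := by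
  have h2 : 0 < 2 + lam := by linarith
  have h1 : 0 < 1 + lam := by linarith
  rw [div_lt_div_iff₀ h2 h1, div_mul_eq_mul_div, div_lt_iff₀ h2]
  constructor <;> intro h <;> linarith

theorem relevance_diversity_tradeoff_general {E : Type*} [NormedAddCommGroup E] [InnerProductSpace ℝ E]
    (ustar u1 u : E) (h1 : ‖u1‖ = 1) (h2 : ‖u‖ = 1)
    (horth : (inner ℝ u1 u : ℝ) = 0) (lam : ℝ) (hlam : 0 < lam)
    (a b : ℝ) (ha : a = (inner ℝ ustar u1 : ℝ)) (hb : b = (inner ℝ ustar u : ℝ)) :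
    ((inner ℝ ustar ustar : ℝ) - postK (id : E → E) lam ![u1, u1] ustar ustar
        = 2 * a ^ 2 / (2 + lam))
    ∧ ((inner ℝ ustar ustar : ℝ) - postK (id : E → E) lam ![u1, u] ustar ustar
        = (a ^ 2 + b ^ 2) / (1 + lam))
    ∧ (((inner ℝ ustar ustar : ℝ) - postK (id : E → E) lam ![u1, u1] ustar ustar
          < (inner ℝ ustar ustar : ℝ) - postK (id : E → E) lam ![u1, u] ustar ustar) ↔
        lam / (2 + lam) * a ^ 2 < b ^ 2) := by
  have hu1 : inner ℝ u1 u1 = (1 : ℝ) := by rw [real_inner_self_eq_norm_sq, h1, one_pow]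
  have hu : inner ℝ u u = (1 : ℝ) := by rw [real_inner_self_eq_norm_sq, h2, one_pow]
  have ha' : inner ℝ u1 ustar = a := by rw [real_inner_comm, ha]
  have hb' : inner ℝ u ustar = b := by rw [real_inner_comm, hb]
  have hψ₁ : inner ℝ ustar ustar - postK id lam ![u1, u1] ustar ustar
      = 2 * a ^ 2 / (2 + lam) := by
    rw [inner_sub_postK_id_fin_two, hu1, ha', div_eq_div_iff (by nlinarith) (by linarith)]
    ring
  have hψ₂ : inner ℝ ustar ustar - postK id lam ![u1, u] ustar ustar
      = (a ^ 2 + b ^ 2) / (1 + lam) := by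
    rw [inner_sub_postK_id_fin_two, hu1, hu, horth, ha', hb',
      div_eq_div_iff (by nlinarith) (by linarith)]
    ring
  refine ⟨hψ₁, hψ₂, ?_⟩
  rw [hψ₁, hψ₂]
  exact two_mul_sq_div_lt_sq_add_sq_div_iff (by linarith)

/-- Balancing relevance and diversity: for unit vectors `φ(x*) = ustar`, `φ(x₁) = u1`,
`φ(x) = u` with `u1 ⊥ u`, `a = ⟪ustar,u1⟫`, `b = ⟪ustar,u⟫`, the uncertainty reductions
`ψ(X) = σ²_∅(x*) − σ²_X(x*)` satisfy `ψ({x₁,x₁}) = 2a²/(2+λ')`, `ψ({x₁,x}) = (a²+b²)/(1+λ')`,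
and `ψ({x₁,x}) > ψ({x₁,x₁})` iff `b² > (λ'/(2+λ'))·a²`. -/
theorem relevance_diversity_tradeoff {E : Type*} [NormedAddCommGroup E] [InnerProductSpace ℝ E]
    (ustar u1 u : E) (hstar : ‖ustar‖ = 1) (h1 : ‖u1‖ = 1) (h2 : ‖u‖ = 1)
    (horth : (inner ℝ u1 u : ℝ) = 0) (lam : ℝ) (hlam : 0 < lam)
    (a b : ℝ) (ha : a = (inner ℝ ustar u1 : ℝ)) (hb : b = (inner ℝ ustar u : ℝ)) :
    ((inner ℝ ustar ustar : ℝ) - postK (id : E → E) lam ![u1, u1] ustar ustar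
        = 2 * a ^ 2 / (2 + lam))
    ∧ ((inner ℝ ustar ustar : ℝ) - postK (id : E → E) lam ![u1, u] ustar ustar
        = (a ^ 2 + b ^ 2) / (1 + lam))
    ∧ (((inner ℝ ustar ustar : ℝ) - postK (id : E → E) lam ![u1, u1] ustar ustar
          < (inner ℝ ustar ustar : ℝ) - postK (id : E → E) lam ![u1, u] ustar ustar) ↔
        lam / (2 + lam) * a ^ 2 < b ^ 2) :=
  relevance_diversity_tradeoff_general ustar u1 u h1 h2 horth lam hlam a b ha hb
end

section
/- Let φ : X → ℝ^d, D ⊆ X a set of data points, Φ a matrix whose rows form a basis of span{φ(x) : x ∈ D}, and Π the orthogonal projection onto the orthogonal complement of the row span of Φ. Then for every finite multiset X' of points from D, λ' > 0, and every x* ∈ X, the regularized posterior variance satisfies σ²_{X'}(x*) ≥ ‖Π φ(x*)‖₂². In particular, if φ(x*) is orthogonal to span{φ(x) : x ∈ D}, then σ²_{X'}(x*) = ‖φ(x*)‖₂² for every X': no data from D can reduce the uncertainty about x*. -/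
open Matrix

/-! Conditioning sees `φ x*` only through the inner products `⟪φ xᵢ, φ x*⟫`, which do not change
when `φ x*` is replaced by its projection `p` onto `span (φ '' D)`. With `c = (K + λ I)⁻¹ k` and
`u = ∑ cᵢ φ xᵢ`, the subtracted term is `⟪u, p⟫ = c ⬝ (K + λ I) c = ‖u‖² + λ ‖c‖²`, so
`‖u‖² ≤ ⟪u, p⟫ ≤ ‖u‖ ‖p‖`, whence `‖u‖ ≤ ‖p‖` and the variance drops by at most `‖p‖²`.
Pythagoras, `‖φ x*‖² = ‖p‖² + ‖Π φ x*‖²`, leaves at least `‖Π φ x*‖²`. -/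

open scoped InnerProductSpace

section VarianceReduction

variable {ι E : Type*} [Fintype ι] [DecidableEq ι] [NormedAddCommGroup E] [InnerProductSpace ℝ E]

/-- The term `k_X(v)ᵀ (K_X + λ I)⁻¹ k_X(v)` that `postK` subtracts from the prior variance. -/
noncomputable def varianceReduction (w : ι → E) (lam : ℝ) (v : E) : ℝ :=
  (fun i => ⟪w i, v⟫_ℝ) ⬝ᵥ (gram ℝ w + lam • (1 : Matrix ι ι ℝ))⁻¹ *ᵥ
    (fun i => ⟪w i, v⟫_ℝ)

theorem posDef_gram_add_smul_one (w : ι → E) {lam : ℝ} (hlam : 0 < lam) :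
    (gram ℝ w + lam • (1 : Matrix ι ι ℝ)).PosDef :=
  PosDef.posSemidef_add (posSemidef_gram ℝ w) (PosDef.one.smul hlam)

theorem varianceReduction_le_norm_sq (w : ι → E) {lam : ℝ} (hlam : 0 < lam) (v : E) :
    varianceReduction w lam v ≤ ‖v‖ ^ 2 := by
  set M := gram ℝ w + lam • (1 : Matrix ι ι ℝ)
  set k : ι → ℝ := fun i => ⟪w i, v⟫_ℝ
  set c := M⁻¹ *ᵥ k
  set u := ∑ i, c i • w i
  have hMc : M *ᵥ c = k := by
    rw [mulVec_mulVec, mul_nonsing_inv _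
      ((isUnit_iff_isUnit_det _).mp (posDef_gram_add_smul_one w hlam).isUnit),
      one_mulVec]
  have hck : c ⬝ᵥ k = ⟪u, v⟫_ℝ := by
    simp only [dotProduct, k, u, sum_inner, real_inner_smul_left]
  have hcMc : c ⬝ᵥ k = ‖u‖ ^ 2 + lam * (c ⬝ᵥ c) := by
    have := star_dotProduct_gram_mulVec w c c
    simp only [star_trivial] at this
    rw [← hMc, add_mulVec, dotProduct_add, this, real_inner_self_eq_norm_sq, smul_mulVec,
      one_mulVec, dotProduct_smul, smul_eq_mul]
  have hcc : 0 ≤ c ⬝ᵥ c := Finset.sum_nonneg fun i _ => mul_self_nonneg (c i)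
  have huv : ‖u‖ ^ 2 ≤ ⟪u, v⟫_ℝ := by nlinarith [mul_nonneg hlam.le hcc]
  have hu : ‖u‖ ≤ ‖v‖ := by
    nlinarith [real_inner_le_norm u v, norm_nonneg u, norm_nonneg v]
  calc varianceReduction w lam v = c ⬝ᵥ k := dotProduct_comm _ _
    _ = ⟪u, v⟫_ℝ := hck
    _ ≤ ‖u‖ * ‖v‖ := real_inner_le_norm u v
    _ ≤ ‖v‖ * ‖v‖ := by gcongr
    _ = ‖v‖ ^ 2 := (sq _).symm

theorem varianceReduction_congr {w : ι → E} {lam : ℝ} {v v' : E}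
    (h : ∀ i, ⟪w i, v⟫_ℝ = ⟪w i, v'⟫_ℝ) :
    varianceReduction w lam v = varianceReduction w lam v' := by
  simp only [varianceReduction, h]

theorem varianceReduction_eq_zero {w : ι → E} {lam : ℝ} {v : E}
    (h : ∀ i, ⟪w i, v⟫_ℝ = 0) : varianceReduction w lam v = 0 := by
  simp only [varianceReduction, h]
  exact zero_dotProduct _

theorem varianceReduction_starProjection {w : ι → E} {lam : ℝ} (K : Submodule ℝ E)
    [K.HasOrthogonalProjection] (hw : ∀ i, w i ∈ K) (v : E) :
    varianceReduction w lam (K.starProjection v) = varianceReduction w lam v :=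
  varianceReduction_congr fun i => by
    rw [← Submodule.inner_starProjection_left_eq_right,
      Submodule.starProjection_eq_self_iff.mpr (hw i)]

end VarianceReduction

section PostK

variable {α E : Type*} [NormedAddCommGroup E] [InnerProductSpace ℝ E] {n : ℕ}

theorem postK_self (φ : α → E) (lam : ℝ) (xs : Fin n → α) (x : α) :
    postK φ lam xs x x = ‖φ x‖ ^ 2 - varianceReduction (fun i => φ (xs i)) lam (φ x) := by
  rw [postK, real_inner_self_eq_norm_sq]
  rfl

theorem norm_sq_starProjection_orthogonal_le_postK_self (φ : α → E) {lam : ℝ} (hlam : 0 < lam)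
    (K : Submodule ℝ E) [K.HasOrthogonalProjection] {xs : Fin n → α} (hxs : ∀ i, φ (xs i) ∈ K)
    (x : α) : ‖Kᗮ.starProjection (φ x)‖ ^ 2 ≤ postK φ lam xs x x := by
  calc ‖Kᗮ.starProjection (φ x)‖ ^ 2 = ‖φ x‖ ^ 2 - ‖K.starProjection (φ x)‖ ^ 2 := by
        rw [Submodule.norm_sq_eq_add_norm_sq_projection (φ x) K]
        simp only [Submodule.starProjection_apply, Submodule.coe_norm]
        ring
    _ ≤ ‖φ x‖ ^ 2 - varianceReduction (fun i => φ (xs i)) lam (K.starProjection (φ x)) :=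
        sub_le_sub_left (varianceReduction_le_norm_sq _ hlam _) _
    _ = postK φ lam xs x x := by rw [varianceReduction_starProjection K hxs, postK_self]

theorem postK_self_of_inner_eq_zero (φ : α → E) (lam : ℝ) {xs : Fin n → α} {x : α}
    (h : ∀ i, ⟪φ (xs i), φ x⟫_ℝ = 0) : postK φ lam xs x x = ‖φ x‖ ^ 2 := by
  rw [postK_self, varianceReduction_eq_zero h, sub_zero]

end PostK

/-- Irreducible uncertainty: for any points selected from the data space `D`, the
regularized posterior variance about `x*` is at least the squared norm of the projection
of `φ(x*)` onto the orthogonal complement of `span {φ x : x ∈ D}`. In particular, if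
`φ(x*)` is orthogonal to the span, no data from `D` reduces the uncertainty about `x*`. -/
theorem irreducible_uncertainty {α : Type*} {d : ℕ}
    (φ : α → EuclideanSpace ℝ (Fin d)) (D : Set α) (xstar : α) :
    (∀ (n : ℕ) (xs : Fin n → α), (∀ i, xs i ∈ D) → ∀ lam : ℝ, 0 < lam →
      ‖(Submodule.orthogonalProjection (Submodule.span ℝ (φ '' D))ᗮ (φ xstar)
          : EuclideanSpace ℝ (Fin d))‖ ^ 2 ≤ postK φ lam xs xstar xstar)
    ∧ (φ xstar ∈ (Submodule.span ℝ (φ '' D))ᗮ →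
        ∀ (n : ℕ) (xs : Fin n → α), (∀ i, xs i ∈ D) → ∀ lam : ℝ, 0 < lam →
          postK φ lam xs xstar xstar = ‖φ xstar‖ ^ 2) := by
  have hmem : ∀ {n} (xs : Fin n → α), (∀ i, xs i ∈ D) →
      ∀ i, φ (xs i) ∈ Submodule.span ℝ (φ '' D) :=
    fun xs hxs i => Submodule.subset_span ⟨xs i, hxs i, rfl⟩
  refine ⟨fun n xs hxs lam hlam => ?_, fun horth n xs hxs lam _ => ?_⟩
  · exact norm_sq_starProjection_orthogonal_le_postK_self φ hlam _ (hmem xs hxs) xstar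
  · exact postK_self_of_inner_eq_zero φ lam fun i =>
      (Submodule.mem_orthogonal _ _).mp horth _ (hmem xs hxs i)
end

section
/- Let ψ : finite multisets of D → ℝ be monotone (ψ(X) ≤ ψ(X ∪ {x})), submodular (ψ(X' ∪ {x}) − ψ(X') ≥ ψ(X ∪ {x}) − ψ(X) whenever X' ⊆ X), and normalized (ψ(∅) = 0). Let X_n be constructed greedily: x_{k+1} ∈ argmax_{x ∈ D} ψ(X_k ∪ {x}). Then for every n, ψ(X_n) ≥ (1 − 1/e) · max over multisets X of size n from D of ψ(X). -/
/-- Nemhauser–Wolsey–Fisher guarantee for greedy maximization of a normalized monotone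
submodular function over multisets of a finite ground set `D`: the greedily constructed
multiset `X n` of size `n` satisfies `ψ(X n) ≥ (1 − 1/e) · max_{|Y| = n, Y ⊆ D} ψ(Y)`. -/
theorem greedy_submodular_guarantee {α : Type*} (D : Finset α) (ψ : Multiset α → ℝ)
    (hmono : ∀ (X : Multiset α) (x : α), ψ X ≤ ψ (x ::ₘ X))
    (hsub : ∀ (X' X : Multiset α) (x : α), X' ≤ X →
      ψ (x ::ₘ X) - ψ X ≤ ψ (x ::ₘ X') - ψ X')
    (hzero : ψ 0 = 0)
    (X : ℕ → Multiset α) (hX0 : X 0 = 0)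
    (hgreedy : ∀ k, ∃ x ∈ D, X (k + 1) = x ::ₘ X k ∧ ∀ y ∈ D, ψ (y ::ₘ X k) ≤ ψ (x ::ₘ X k)) :
    ∀ (n : ℕ) (Y : Multiset α), (∀ y ∈ Y, y ∈ D) → Multiset.card Y = n →
      (1 - 1 / Real.exp 1) * ψ Y ≤ ψ (X n) := by
  intro n Y hYD hYcard
  have mono_add : ∀ (X' Y' : Multiset α), ψ Y' ≤ ψ (X' + Y') := by
    intro X' Y'
    induction X' using Multiset.induction with
    | empty => simp
    | cons x X'' ih =>
      rw [Multiset.cons_add]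
      exact ih.trans (hmono _ x)
  have nonneg : ∀ Y' : Multiset α, 0 ≤ ψ Y' := by
    intro Y'
    induction Y' using Multiset.induction with
    | empty => simp [hzero]
    | cons x Y'' ih => exact ih.trans (hmono _ x)
  have sum_bound : ∀ (Y' X' : Multiset α),
      ψ (X' + Y') ≤ ψ X' + (Y'.map (fun y => ψ (y ::ₘ X') - ψ X')).sum := by
    intro Y' X'
    induction Y' using Multiset.induction with
    | empty => simp
    | cons y Y'' ih =>
      rw [Multiset.map_cons, Multiset.sum_cons]
      have h1 : X' + y ::ₘ Y'' = y ::ₘ (X' + Y'') := by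
        rw [Multiset.add_cons]
      have h2 : ψ (y ::ₘ (X' + Y'')) - ψ (X' + Y'') ≤ ψ (y ::ₘ X') - ψ X' :=
        hsub X' (X' + Y'') y (Multiset.le_add_right _ _)
      rw [h1]
      linarith
  rcases Nat.eq_zero_or_pos n with rfl | hn
  · have hY0 : Y = 0 := Multiset.card_eq_zero.mp hYcard
    subst hY0
    simp [hzero, hX0]
  have hn' : (0:ℝ) < n := by exact_mod_cast hn
  have h01 : (0:ℝ) ≤ 1 - 1/(n:ℝ) := by
    have : (1:ℝ) ≤ n := by exact_mod_cast hn
    have : 1/(n:ℝ) ≤ 1 := by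
      rw [div_le_one hn']; exact this
    linarith
  have step : ∀ k, ψ Y - ψ (X (k+1)) ≤ (1 - 1/(n:ℝ)) * (ψ Y - ψ (X k)) := by
    intro k
    obtain ⟨x, hxD, hXk1, hmax⟩ := hgreedy k
    have hbound : ψ Y ≤ ψ (X k) + n * (ψ (X (k+1)) - ψ (X k)) := by
      have h1 := (mono_add (X k) Y).trans (sum_bound Y (X k))
      have h2 : (Y.map (fun y => ψ (y ::ₘ X k) - ψ (X k))).sum
          ≤ (Multiset.card (Y.map (fun y => ψ (y ::ₘ X k) - ψ (X k))))
            • (ψ (X (k+1)) - ψ (X k)) := by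
        apply Multiset.sum_le_card_nsmul
        intro a ha
        obtain ⟨y, hy, rfl⟩ := Multiset.mem_map.mp ha
        have := hmax y (hYD y hy)
        rw [hXk1]
        linarith
      rw [Multiset.card_map, hYcard, nsmul_eq_mul] at h2
      linarith
    have hd : (ψ Y - ψ (X k)) / n ≤ ψ (X (k+1)) - ψ (X k) := by
      rw [div_le_iff₀ hn']
      nlinarith [hbound]
    have hr : (1 - 1/(n:ℝ)) * (ψ Y - ψ (X k))
        = (ψ Y - ψ (X k)) - (ψ Y - ψ (X k)) / n := by
      field_simp
    linarith
  have iter : ∀ k, ψ Y - ψ (X k) ≤ (1 - 1/(n:ℝ))^k * ψ Y := by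
    intro k
    induction k with
    | zero => simp [hX0, hzero]
    | succ k ih =>
      calc ψ Y - ψ (X (k+1)) ≤ (1 - 1/(n:ℝ)) * (ψ Y - ψ (X k)) := step k
        _ ≤ (1 - 1/(n:ℝ)) * ((1 - 1/(n:ℝ))^k * ψ Y) :=
            mul_le_mul_of_nonneg_left ih h01
        _ = (1 - 1/(n:ℝ))^(k+1) * ψ Y := by ring
  have hpow : (1 - 1/(n:ℝ))^n ≤ 1 / Real.exp 1 := by
    have h1 : 1 - 1/(n:ℝ) ≤ Real.exp (-(1/(n:ℝ))) := by
      have := Real.add_one_le_exp (-(1/(n:ℝ)))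
      linarith
    have h2 : (1 - 1/(n:ℝ))^n ≤ (Real.exp (-(1/(n:ℝ))))^n :=
      pow_le_pow_left₀ h01 h1 n
    have h3 : (Real.exp (-(1/(n:ℝ))))^n = Real.exp (-1) := by
      rw [← Real.exp_nat_mul]
      congr 1
      field_simp
    rw [h3, Real.exp_neg, ← one_div] at h2
    exact h2
  have hfin := iter n
  have hYnn := nonneg Y
  have hmul : (1 - 1/(n:ℝ))^n * ψ Y ≤ (1 / Real.exp 1) * ψ Y :=
    mul_le_mul_of_nonneg_right hpow hYnn
  have hexp : (1 - 1/Real.exp 1) * ψ Y = ψ Y - (1/Real.exp 1) * ψ Y := by ring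
  linarith
end

section
/- Let k be a positive semidefinite kernel on X, λ' > 0, and fix x* ∈ X with σ²_∅(x*) = k(x*,x*) > 0. As λ' → ∞, for any fixed finite multiset X of points, λ' · (σ²_∅(x*) − σ²_X(x*)) → Σ_{x ∈ X} k(x*, x)². In particular, for single-point selection, argmin_{x ∈ D} σ²_{{x}}(x*) converges (for all sufficiently large λ', on a finite candidate set D with a unique maximizer) to argmax_{x ∈ D} k(x*, x)², i.e., SIFT(λ') degenerates to retrieval of the point with largest squared inner product as λ' → ∞. -/
open Matrix

/-- Regularized posterior variance of an abstract kernel `k` about `x*` after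
conditioning on the points `xs`: `σ²_X(x*) = k(x*,x*) − k_X(x*)ᵀ(K_X + λ'I)⁻¹k_X(x*)`. -/
noncomputable def sigSq {α : Type*} (k : α → α → ℝ) (lam : ℝ) {n : ℕ}
    (xs : Fin n → α) (xstar : α) : ℝ :=
  k xstar xstar -
    (fun i => k (xs i) xstar) ⬝ᵥ
      ((Matrix.of (fun i j => k (xs i) (xs j)) + lam • (1 : Matrix (Fin n) (Fin n) ℝ))⁻¹).mulVec
        (fun i => k (xs i) xstar)

/-- Symmetry of the kernel, from posite-semidefiniteness of all Gram matrices. -/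
lemma kernel_symm {α : Type*} (k : α → α → ℝ)
    (hpsd : ∀ (n : ℕ) (xs : Fin n → α),
      (Matrix.of (fun i j => k (xs i) (xs j)) : Matrix (Fin n) (Fin n) ℝ).PosSemidef)
    (x y : α) : k x y = k y x := by
  have h := (hpsd 2 ![x, y]).1
  have := congrFun (congrFun h 0) 1
  simpa [Matrix.conjTranspose_apply, Matrix.of_apply] using this.symm

/-- Part (a): the scaled uncertainty reduction tends to the sum of squared inner products. -/
lemma tendsto_scaled_reduction {α : Type*} (k : α → α → ℝ)
    (hpsd : ∀ (n : ℕ) (xs : Fin n → α),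
      (Matrix.of (fun i j => k (xs i) (xs j)) : Matrix (Fin n) (Fin n) ℝ).PosSemidef)
    (xstar : α) (n : ℕ) (xs : Fin n → α) :
    Filter.Tendsto (fun lam => lam * (k xstar xstar - sigSq k lam xs xstar))
      Filter.atTop (nhds (∑ i, (k xstar (xs i)) ^ 2)) := by
  classical
  set K : Matrix (Fin n) (Fin n) ℝ := Matrix.of (fun i j => k (xs i) (xs j)) with hK
  set v : Fin n → ℝ := fun i => k (xs i) xstar with hv
  -- The auxiliary continuous function
  set F : ℝ → ℝ := fun t => v ⬝ᵥ ((t • K + 1)⁻¹).mulVec v with hF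
  have hF0 : F 0 = ∑ i, (k xstar (xs i)) ^ 2 := by
    have : F 0 = v ⬝ᵥ v := by simp [hF]
    rw [this, dotProduct]
    refine Finset.sum_congr rfl fun i _ => ?_
    show k (xs i) xstar * k (xs i) xstar = k xstar (xs i) ^ 2
    rw [kernel_symm k hpsd (xs i) xstar, sq]
  have hcont : ContinuousAt F 0 := by
    have hcontA : Continuous fun t : ℝ => t • K + 1 :=
      (continuous_id.smul continuous_const).add continuous_const
    have hinv : ContinuousAt Inv.inv ((fun t : ℝ => t • K + 1) 0) := by
      apply continuousAt_matrix_inv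
      have hdet : ((fun t : ℝ => t • K + 1) 0).det = 1 := by simp
      rw [hdet]
      have h1 : ContinuousAt (Inv.inv : ℝ → ℝ) 1 := continuousAt_inv₀ one_ne_zero
      rw [Ring.inverse_eq_inv']
      exact h1
    have h2 : ContinuousAt (fun t : ℝ => ((t • K + 1)⁻¹ : Matrix (Fin n) (Fin n) ℝ)) 0 :=
      ContinuousAt.comp (g := Inv.inv) (f := fun t : ℝ => t • K + 1) hinv hcontA.continuousAt
    have hG : Continuous fun M : Matrix (Fin n) (Fin n) ℝ => v ⬝ᵥ M.mulVec v :=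
      continuous_const.dotProduct (continuous_id.matrix_mulVec continuous_const)
    exact hG.continuousAt.comp h2
  have htend : Filter.Tendsto (fun lam : ℝ => F lam⁻¹) Filter.atTop (nhds (F 0)) :=
    (hcont.tendsto).comp tendsto_inv_atTop_zero
  rw [← hF0]
  refine htend.congr' ?_
  filter_upwards [Filter.eventually_gt_atTop (0:ℝ)] with lam hlam
  -- equality for lam > 0
  have hlam0 : lam ≠ 0 := ne_of_gt hlam
  have hBpd : (K + lam • (1 : Matrix (Fin n) (Fin n) ℝ)).PosDef := by
    refine Matrix.PosDef.posSemidef_add (hpsd n xs) ?_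
    rw [Matrix.smul_one_eq_diagonal]
    exact Matrix.posDef_diagonal_iff.mpr fun _ => hlam
  have hdetB : IsUnit (K + lam • (1 : Matrix (Fin n) (Fin n) ℝ)).det :=
    isUnit_iff_ne_zero.mpr (ne_of_gt hBpd.det_pos)
  have hrescale : (lam⁻¹ • K + 1 : Matrix (Fin n) (Fin n) ℝ)
      = lam⁻¹ • (K + lam • (1 : Matrix (Fin n) (Fin n) ℝ)) := by
    rw [smul_add, smul_smul, inv_mul_cancel₀ hlam0, one_smul]
  have hsmulinv : ((lam⁻¹ • (K + lam • (1 : Matrix (Fin n) (Fin n) ℝ)))⁻¹)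
      = lam • (K + lam • (1 : Matrix (Fin n) (Fin n) ℝ))⁻¹ := by
    refine Matrix.inv_eq_left_inv ?_
    rw [Matrix.smul_mul, Matrix.mul_smul, Matrix.nonsing_inv_mul _ hdetB, smul_smul,
      mul_inv_cancel₀ hlam0, one_smul]
  have key : F lam⁻¹ = lam * (v ⬝ᵥ ((K + lam • (1 : Matrix (Fin n) (Fin n) ℝ))⁻¹).mulVec v) := by
    rw [hF]
    simp only [hrescale, hsmulinv, Matrix.smul_mulVec, dotProduct_smul, smul_eq_mul]
  have : k xstar xstar - sigSq k lam xs xstar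
      = v ⬝ᵥ ((K + lam • (1 : Matrix (Fin n) (Fin n) ℝ))⁻¹).mulVec v := by
    simp [sigSq, hK, hv]
  rw [this, key]

/-- As `λ' → ∞`: (a) `λ'·(σ²_∅(x*) − σ²_X(x*)) → ∑_{x ∈ X} k(x*,x)²` for any fixed finite
multiset `X`; (b) on a finite candidate set `D` with a unique maximizer `x₀` of `k(x*,·)²`,
for all sufficiently large `λ'` the single point minimizing `σ²_{{x}}(x*)` over `D` is
`x₀`, i.e. SIFT(λ') degenerates to retrieval of the largest squared inner product. -/
theorem sift_degenerates_to_retrieval {α : Type*} (k : α → α → ℝ)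
    (hpsd : ∀ (n : ℕ) (xs : Fin n → α),
      (Matrix.of (fun i j => k (xs i) (xs j)) : Matrix (Fin n) (Fin n) ℝ).PosSemidef)
    (xstar : α) (hpos : 0 < k xstar xstar) :
    (∀ (n : ℕ) (xs : Fin n → α),
      Filter.Tendsto (fun lam => lam * (k xstar xstar - sigSq k lam xs xstar))
        Filter.atTop (nhds (∑ i, (k xstar (xs i)) ^ 2)))
    ∧ ∀ (D : Finset α) (x0 : α), x0 ∈ D →
        (∀ y ∈ D, y ≠ x0 → (k xstar y) ^ 2 < (k xstar x0) ^ 2) →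
        ∃ Λ : ℝ, ∀ lam : ℝ, Λ ≤ lam → ∀ y ∈ D, y ≠ x0 →
          sigSq k lam ![x0] xstar < sigSq k lam ![y] xstar := by
  constructor
  · exact fun n xs => tendsto_scaled_reduction k hpsd xstar n xs
  · intro D x0 hx0 hmax
    have hpoint : ∀ z : α,
        Filter.Tendsto (fun lam => lam * (k xstar xstar - sigSq k lam ![z] xstar))
          Filter.atTop (nhds ((k xstar z) ^ 2)) := by
      intro z
      have := tendsto_scaled_reduction k hpsd xstar 1 ![z]
      simpa using this
    have hev : ∀ᶠ lam : ℝ in Filter.atTop, ∀ y ∈ D, y ≠ x0 →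
        sigSq k lam ![x0] xstar < sigSq k lam ![y] xstar := by
      rw [Filter.eventually_all_finset]
      intro y hy
      by_cases hne : y ≠ x0
      · have hlt := (hpoint y).eventually_lt (hpoint x0) (hmax y hy hne)
        filter_upwards [hlt, Filter.eventually_gt_atTop (0:ℝ)] with lam h1 h2 _hne'
        have := (mul_lt_mul_iff_right₀ h2).mp h1
        linarith
      · filter_upwards with lam h; exact absurd h hne
    rcases Filter.eventually_atTop.mp hev with ⟨Λ, hΛ⟩
    exact ⟨Λ, fun lam hlam => hΛ lam hlam⟩
end
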